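/- In the constant-parameter case where ℓ(u) = ℓ• and v(u) = s for all u = 1,…,U, the variances of the two combined likelihood estimators are Var[L̃] = (1/R) [ (s + ℓ•²)^U − ℓ•^{2U} ] and Var[L̂] = (s/R + ℓ•²)^U − ℓ•^{2U}. -/

import Mathlib

/-!
The rows `(L (u, r))_r` and the columns `(L (u, r))_u` of an independent array are independent
families of random vectors, so both estimators are assembled from independent pieces. For
independent `Xᵢ`, `E[∏ Xᵢ²] = ∏ E[Xᵢ²]` gives `Var[∏ Xᵢ] = ∏ (Var[Xᵢ] + E[Xᵢ]²) - ∏ E[Xᵢ]²`.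
For `L̃` this is applied to each column product, and the `R` independent columns are then
averaged; for `L̂` each row is averaged (mean `ℓ•`, variance `s / R`) and the rule is applied to
the product of the `U` independent row means.
-/

open MeasureTheory ProbabilityTheory

namespace ProbabilityTheory

variable {Ω : Type*} [MeasurableSpace Ω] {μ : Measure Ω}

lemma iIndepFun.curry {ι κ β : Type*} [Countable ι] [Countable κ] [MeasurableSpace β]
    {X : ι × κ → Ω → β} (h : iIndepFun X μ) (hX : ∀ p, AEMeasurable (X p) μ) :
    iIndepFun (fun i ω j ↦ X (i, j) ω) μ := by
  have := h.isProbabilityMeasure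
  have _ p := Measure.isProbabilityMeasure_map (hX p)
  have hrow : ∀ i, AEMeasurable (fun ω j ↦ X (i, j) ω) μ :=
    fun i ↦ aemeasurable_pi_iff.2 fun j ↦ hX (i, j)
  have hrowLaw : ∀ i,
      μ.map (fun ω j ↦ X (i, j) ω) = Measure.infinitePi fun j ↦ μ.map (X (i, j)) :=
    fun i ↦ (h.precomp (Prod.mk_right_injective i)).map_fun_eq_infinitePi_map₀' fun j ↦ hX (i, j)
  rw [iIndepFun_iff_map_fun_eq_infinitePi_map₀' hrow]
  simp_rw [hrowLaw]
  rw [← Measure.infinitePi_map_curry (fun i j ↦ μ.map (X (i, j))),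
    ← h.map_fun_eq_infinitePi_map₀' hX,
    AEMeasurable.map_map_of_aemeasurable (by fun_prop) (aemeasurable_pi_iff.2 hX)]
  rfl

section Product

variable {ι : Type*} {X : ι → Ω → ℝ}

lemma iIndepFun.integrable_fun_finsetProd (h : iIndepFun X μ) (hX : ∀ i, Integrable (X i) μ)
    (s : Finset ι) : Integrable (fun ω ↦ ∏ i ∈ s, X i ω) μ := by
  classical
  induction s using Finset.induction_on with
  | empty => have := h.isProbabilityMeasure; simp
  | insert j s hj ih =>
    have hind := h.indepFun_finsetProd_of_notMem₀ (fun i ↦ (hX i).aemeasurable) hj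
    have hmul := hind.symm.integrable_mul (hX j)
      (ih.congr (.of_forall fun ω ↦ (Finset.prod_apply ..).symm))
    exact hmul.congr (.of_forall fun ω ↦ by simp [Finset.prod_apply, Finset.prod_insert hj])

variable [Fintype ι]

lemma iIndepFun.memLp_two_fun_prod (h : iIndepFun X μ) (hX : ∀ i, MemLp (X i) 2 μ) :
    MemLp (fun ω ↦ ∏ i, X i ω) 2 μ := by
  have hsq := h.comp (fun _ x ↦ x ^ 2) fun _ ↦ measurable_id.pow_const 2
  rw [memLp_two_iff_integrable_sq
    (Finset.aestronglyMeasurable_fun_prod _ fun i _ ↦ (hX i).1)]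
  simp_rw [← Finset.prod_pow]
  exact hsq.integrable_fun_finsetProd (fun i ↦ (hX i).integrable_sq) Finset.univ

lemma iIndepFun.variance_fun_prod [IsProbabilityMeasure μ] (h : iIndepFun X μ)
    (hX : ∀ i, MemLp (X i) 2 μ) :
    Var[fun ω ↦ ∏ i, X i ω; μ] = ∏ i, (Var[X i; μ] + μ[X i] ^ 2) - ∏ i, μ[X i] ^ 2 := by
  have hsq := h.comp (fun _ x ↦ x ^ 2) fun _ ↦ measurable_id.pow_const 2
  have hmoment : ∀ i, Var[X i; μ] + μ[X i] ^ 2 = μ[X i ^ 2] := fun i ↦ by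
    rw [variance_eq_sub (hX i)]; ring
  rw [variance_eq_sub (h.memLp_two_fun_prod hX), Finset.prod_congr rfl fun i _ ↦ hmoment i,
    Finset.prod_pow, h.integral_fun_prod_eq_prod_integral fun i ↦ (hX i).1]
  congr 1
  simp_rw [Pi.pow_apply, ← Finset.prod_pow]
  exact hsq.integral_fun_prod_eq_prod_integral fun i ↦ (hX i).1.pow 2

end Product

section SampleMean

variable {κ : Type*} [Fintype κ] {X : κ → Ω → ℝ}

lemma integral_sampleMean [Nonempty κ] {m : ℝ} (hX : ∀ k, Integrable (X k) μ)
    (hm : ∀ k, μ[X k] = m) :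
    ∫ ω, 1 / (Fintype.card κ : ℝ) * ∑ k, X k ω ∂μ = m := by
  rw [integral_const_mul, integral_finsetSum _ fun k _ ↦ hX k]
  simp [hm]

lemma iIndepFun.variance_sampleMean [IsProbabilityMeasure μ] {v : ℝ} (h : iIndepFun X μ)
    (hX : ∀ k, MemLp (X k) 2 μ) (hv : ∀ k, Var[X k; μ] = v) :
    Var[fun ω ↦ 1 / (Fintype.card κ : ℝ) * ∑ k, X k ω; μ] = v / Fintype.card κ := by
  have hsum : Var[fun ω ↦ ∑ k, X k ω; μ] = Fintype.card κ * v := by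
    rw [← Finset.sum_fn, IndepFun.variance_sum (fun k _ ↦ hX k)
      fun i _ j _ hij ↦ h.indepFun hij]
    simp [hv]
  rw [variance_const_mul, hsum]
  rcases eq_or_ne (Fintype.card κ : ℝ) 0 with hκ | hκ
  · simp [hκ]
  · field_simp

end SampleMean

end ProbabilityTheory

theorem variances_constant_parameter_case_general
    {Ω : Type*} [MeasurableSpace Ω] (μ : Measure Ω) [IsProbabilityMeasure μ]
    (U R : ℕ) (hR : 1 ≤ R)
    (L : Fin U × Fin R → Ω → ℝ) (lb s : ℝ)
    (hIndep : iIndepFun L μ)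
    (hL2 : ∀ p, MemLp (L p) 2 μ)
    (hmean : ∀ p, μ[L p] = lb)
    (hvar : ∀ p, variance (L p) μ = s) :
    variance (fun ω => (1 / (R : ℝ)) * ∑ r, ∏ u, L (u, r) ω) μ =
        (1 / (R : ℝ)) * ((s + lb ^ 2) ^ U - lb ^ (2 * U)) ∧
      variance (fun ω => ∏ u : Fin U, ((1 / (R : ℝ)) * ∑ r, L (u, r) ω)) μ =
        (s / R + lb ^ 2) ^ U - lb ^ (2 * U) := by
  have hmeas : ∀ p, AEMeasurable (L p) μ := fun p ↦ (hL2 p).aemeasurable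
  have hcol : ∀ r, iIndepFun (fun u ↦ L (u, r)) μ := fun r ↦
    hIndep.precomp (Prod.mk_left_injective r)
  have hrow : ∀ u, iIndepFun (fun r ↦ L (u, r)) μ := fun u ↦
    hIndep.precomp (Prod.mk_right_injective u)
  have hcolProds : iIndepFun (fun r ω ↦ ∏ u, L (u, r) ω) μ :=
    ((hIndep.precomp (Equiv.prodComm (Fin R) (Fin U)).injective).curry fun _ ↦ hmeas _).comp
      (fun _ x ↦ ∏ u, x u) fun _ ↦ by fun_prop
  have hrowMeans : iIndepFun (fun u ω ↦ 1 / (R : ℝ) * ∑ r, L (u, r) ω) μ :=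
    (hIndep.curry hmeas).comp (fun _ x ↦ 1 / (R : ℝ) * ∑ r, x r) fun _ ↦ by fun_prop
  have hcolVar : ∀ r, Var[fun ω ↦ ∏ u, L (u, r) ω; μ] = (s + lb ^ 2) ^ U - lb ^ (2 * U) :=
    fun r ↦ by simp [(hcol r).variance_fun_prod fun u ↦ hL2 _, hvar, hmean, pow_mul]
  have : Nonempty (Fin R) := ⟨⟨0, hR⟩⟩
  have hrowE : ∀ u, ∫ ω, 1 / (R : ℝ) * ∑ r, L (u, r) ω ∂μ = lb := fun u ↦ by
    simpa using integral_sampleMean (fun r ↦ (hL2 (u, r)).integrable one_le_two)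
      fun r ↦ hmean (u, r)
  have hrowVar : ∀ u, Var[fun ω ↦ 1 / (R : ℝ) * ∑ r, L (u, r) ω; μ] = s / R := fun u ↦ by
    simpa using (hrow u).variance_sampleMean (fun r ↦ hL2 (u, r)) fun r ↦ hvar (u, r)
  constructor
  · have := hcolProds.variance_sampleMean
      (fun r ↦ (hcol r).memLp_two_fun_prod fun u ↦ hL2 _) hcolVar
    simp only [Fintype.card_fin] at this
    rw [this, one_div_mul_eq_div]
  · rw [hrowMeans.variance_fun_prod fun u ↦ (memLp_finsetSum _ fun r _ ↦ hL2 (u, r)).const_mul _]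
    simp only [hrowVar, hrowE, Finset.prod_const, Finset.card_univ, Fintype.card_fin, pow_mul]

/-- In the constant-parameter case `ℓ(u) = ℓ•` and `v(u) = s` for all `u`, the variances
of the two combined likelihood estimators are
`Var[L̃] = (1/R)[(s + ℓ•²)^U − ℓ•^{2U}]` and `Var[L̂] = (s/R + ℓ•²)^U − ℓ•^{2U}`. -/
theorem variances_constant_parameter_case
    {Ω : Type*} [MeasurableSpace Ω] (μ : Measure Ω) [IsProbabilityMeasure μ]
    (U R : ℕ) (hU : 1 ≤ U) (hR : 1 ≤ R)
    (L : Fin U × Fin R → Ω → ℝ) (lb s : ℝ)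
    (hIndep : iIndepFun L μ)
    (hL2 : ∀ p, MemLp (L p) 2 μ)
    (hmean : ∀ p, μ[L p] = lb)
    (hvar : ∀ p, variance (L p) μ = s) :
    variance (fun ω => (1 / (R : ℝ)) * ∑ r, ∏ u, L (u, r) ω) μ =
        (1 / (R : ℝ)) * ((s + lb ^ 2) ^ U - lb ^ (2 * U)) ∧
      variance (fun ω => ∏ u : Fin U, ((1 / (R : ℝ)) * ∑ r, L (u, r) ω)) μ =
        (s / R + lb ^ 2) ^ U - lb ^ (2 * U) :=
  variances_constant_parameter_case_general μ U R hR L lb s hIndep hL2 hmean hvar
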